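/- (No-signaling direction of Theorem 1.) Let ρ be the canonical two-qubit state with parameters mx, my, mz, m'x, m'y, m'z, Cxx, Cyy, Czz, assumed positive semidefinite, and suppose my = 0 and Cyy = 0. Then for every α, z, u : ℝ the traces Re(trace ρ₊) and Re(trace ρ₋) are positive and P₊(Π(z,u)) = P₋(Π(z,u)); i.e., Bob gains no information about Alice's randomly chosen operation. -/

import Mathlib

open Matrix Kronecker Complex
open scoped ComplexOrder

noncomputable section

/-- Pauli matrix `σx`. -/
def σx : Matrix (Fin 2) (Fin 2) ℂ := !![0, 1; 1, 0]

/-- Pauli matrix `σy`. -/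
def σy : Matrix (Fin 2) (Fin 2) ℂ := !![0, -Complex.I; Complex.I, 0]

/-- Pauli matrix `σz`. -/
def σz : Matrix (Fin 2) (Fin 2) ℂ := !![1, 0; 0, -1]

/-- The simulated PT-symmetric evolution operator at the chosen time. -/
def Upt (α : ℝ) : Matrix (Fin 2) (Fin 2) ℂ :=
  !![(Real.sin α : ℂ), -Complex.I; -Complex.I, -(Real.sin α : ℂ)]

/-- Alice's operation `A₊` (do nothing). -/
def Apos : Matrix (Fin 2) (Fin 2) ℂ := 1

/-- Alice's operation `A₋` (bit flip `σx`). -/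
def Aneg : Matrix (Fin 2) (Fin 2) ℂ := σx

/-- Unnormalized post-selected state after Alice applies `A₊` followed by the
simulated PT evolution. -/
def postPlus (α : ℝ) (ρ : Matrix (Fin 2 × Fin 2) (Fin 2 × Fin 2) ℂ) :
    Matrix (Fin 2 × Fin 2) (Fin 2 × Fin 2) ℂ :=
  ((Upt α * Apos) ⊗ₖ (1 : Matrix (Fin 2) (Fin 2) ℂ)) * ρ *
    ((Upt α * Apos) ⊗ₖ (1 : Matrix (Fin 2) (Fin 2) ℂ))ᴴ

/-- Unnormalized post-selected state after Alice applies `A₋` followed by the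
simulated PT evolution. -/
def postMinus (α : ℝ) (ρ : Matrix (Fin 2 × Fin 2) (Fin 2 × Fin 2) ℂ) :
    Matrix (Fin 2 × Fin 2) (Fin 2 × Fin 2) ℂ :=
  ((Upt α * Aneg) ⊗ₖ (1 : Matrix (Fin 2) (Fin 2) ℂ)) * ρ *
    ((Upt α * Aneg) ⊗ₖ (1 : Matrix (Fin 2) (Fin 2) ℂ))ᴴ

/-- Probability that Bob obtains outcome `Π` given Alice applied `A₊`. -/
def Pplus (α : ℝ) (ρ : Matrix (Fin 2 × Fin 2) (Fin 2 × Fin 2) ℂ)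
    (Pi : Matrix (Fin 2) (Fin 2) ℂ) : ℝ :=
  ((((1 : Matrix (Fin 2) (Fin 2) ℂ) ⊗ₖ Pi) * postPlus α ρ).trace).re /
    ((postPlus α ρ).trace).re

/-- Probability that Bob obtains outcome `Π` given Alice applied `A₋`. -/
def Pminus (α : ℝ) (ρ : Matrix (Fin 2 × Fin 2) (Fin 2 × Fin 2) ℂ)
    (Pi : Matrix (Fin 2) (Fin 2) ℂ) : ℝ :=
  ((((1 : Matrix (Fin 2) (Fin 2) ℂ) ⊗ₖ Pi) * postMinus α ρ).trace).re /
    ((postMinus α ρ).trace).re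

/-- Bob's `σy`-measurement projector onto `|+_y⟩ = (|0⟩ + i|1⟩)/√2`. -/
def Piy : Matrix (Fin 2) (Fin 2) ℂ :=
  (1/2 : ℂ) • !![1, -Complex.I; Complex.I, 1]

/-- Bob's rank-one projector `Π(z,u)` for an arbitrary projective measurement. -/
def Pizu (z u : ℝ) : Matrix (Fin 2) (Fin 2) ℂ :=
  !![((Real.cos (z/2))^2 : ℂ),
     (Real.cos (z/2) : ℂ) * (Real.sin (z/2) : ℂ) * Complex.exp (-(Complex.I * u));
     (Real.cos (z/2) : ℂ) * (Real.sin (z/2) : ℂ) * Complex.exp (Complex.I * u),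
     ((Real.sin (z/2))^2 : ℂ)]

/-- The single-qubit state `|+⟩ = (|0⟩ + |1⟩)/√2`. -/
def ketPlus : Fin 2 → ℂ := ![((1 / Real.sqrt 2 : ℝ) : ℂ), ((1 / Real.sqrt 2 : ℝ) : ℂ)]

/-- The single-qubit state `|−⟩ = (|0⟩ − |1⟩)/√2`. -/
def ketMinus : Fin 2 → ℂ := ![((1 / Real.sqrt 2 : ℝ) : ℂ), ((-(1 / Real.sqrt 2) : ℝ) : ℂ)]

/-- The (normalized) pure state `|ψ_{β,γ}⟩ = (β|++⟩ + γ|−−⟩)/√(β²+γ²)`. -/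
def ψpure (β γ : ℝ) : Fin 2 × Fin 2 → ℂ := fun q =>
  ((β : ℂ) * (ketPlus q.1 * ketPlus q.2) + (γ : ℂ) * (ketMinus q.1 * ketMinus q.2)) /
    ((Real.sqrt (β^2 + γ^2) : ℝ) : ℂ)

/-- The pure two-qubit density matrix `ρ_{β,γ} = |ψ_{β,γ}⟩⟨ψ_{β,γ}|`. -/
def ρpure (β γ : ℝ) : Matrix (Fin 2 × Fin 2) (Fin 2 × Fin 2) ℂ :=
  Matrix.vecMulVec (ψpure β γ) (fun q => starRingEnd ℂ (ψpure β γ q))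

/-- The maximally entangled state `|ψ⁺⟩ = (|00⟩ + |11⟩)/√2`. -/
def ψmax : Fin 2 × Fin 2 → ℂ := fun q =>
  if q.1 = q.2 then ((1 / Real.sqrt 2 : ℝ) : ℂ) else 0

/-- The two-qubit Werner state `ρ_W(p) = p |ψ⁺⟩⟨ψ⁺| + ((1-p)/4) 1`. -/
def ρWerner (p : ℝ) : Matrix (Fin 2 × Fin 2) (Fin 2 × Fin 2) ℂ :=
  (p : ℂ) • Matrix.vecMulVec ψmax (fun q => starRingEnd ℂ (ψmax q)) +
    (((1 - p) / 4 : ℝ) : ℂ) • 1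

/-- The canonical two-qubit state with magnetizations `mx my mz` (Alice),
`nx ny nz` (Bob) and diagonal correlators `Cxx Cyy Czz`. -/
def ρcan (mx my mz nx ny nz Cxx Cyy Czz : ℝ) :
    Matrix (Fin 2 × Fin 2) (Fin 2 × Fin 2) ℂ :=
  (1/4 : ℂ) • ((1 : Matrix (Fin 2 × Fin 2) (Fin 2 × Fin 2) ℂ)
    + (mx : ℂ) • (σx ⊗ₖ (1 : Matrix (Fin 2) (Fin 2) ℂ))
    + (my : ℂ) • (σy ⊗ₖ (1 : Matrix (Fin 2) (Fin 2) ℂ))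
    + (mz : ℂ) • (σz ⊗ₖ (1 : Matrix (Fin 2) (Fin 2) ℂ))
    + (nx : ℂ) • ((1 : Matrix (Fin 2) (Fin 2) ℂ) ⊗ₖ σx)
    + (ny : ℂ) • ((1 : Matrix (Fin 2) (Fin 2) ℂ) ⊗ₖ σy)
    + (nz : ℂ) • ((1 : Matrix (Fin 2) (Fin 2) ℂ) ⊗ₖ σz)
    + (Cxx : ℂ) • (σx ⊗ₖ σx)
    + (Cyy : ℂ) • (σy ⊗ₖ σy)
    + (Czz : ℂ) • (σz ⊗ₖ σz))

/-- Bob's reduced matrix: the partial trace over Alice's subsystem. -/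
def ptraceA (X : Matrix (Fin 2 × Fin 2) (Fin 2 × Fin 2) ℂ) :
    Matrix (Fin 2) (Fin 2) ℂ :=
  Matrix.of fun i j => ∑ k : Fin 2, X (k, i) (k, j)

/-- The trace distance `T(A,B) = (1/2) tr √((A-B)ᴴ (A-B))`, where the square
root is the positive semidefinite square root. -/
def traceDist (A B : Matrix (Fin 2) (Fin 2) ℂ) : ℝ :=
  (1/2) * ((((Matrix.posSemidef_conjTranspose_mul_self (A - B)).1.eigenvectorUnitary :
      Matrix (Fin 2) (Fin 2) ℂ) *
    Matrix.diagonal ((fun x : ℝ => (x : ℂ)) ∘ (√·) ∘ (Matrix.posSemidef_conjTranspose_mul_self (A - B)).1.eigenvalues) *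
    (star ((Matrix.posSemidef_conjTranspose_mul_self (A - B)).1.eigenvectorUnitary :
      Matrix (Fin 2) (Fin 2) ℂ))).trace).re

/-!
The Gram matrices of Alice's two effective operations are
`(U_α A₊)ᴴ (U_α A₊) = (1 + sin² α) • 1 + 2 sin α • σy` and
`(U_α A₋)ᴴ (U_α A₋) = (1 + sin² α) • 1 - 2 sin α • σy`.
Moving Alice's operator around the trace, Bob's unnormalized statistic for an observable `B` is
`tr ((G ⊗ B) ρ)` with `G` the Gram matrix, so the two statistics differ only by a multiple of
`tr ((σy ⊗ B) ρ) = (my · tr B + Cyy · tr (B σy)) / 2`, which vanishes when `my = Cyy = 0`.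
Both are then `(1 + sin² α) · tr ((1 ⊗ B) ρ)`, and `B = 1` gives the positive normalization
`1 + sin² α`.
-/

theorem Matrix.trace_one_kronecker_mul_conj {R l m n : Type*} [CommRing R] [StarRing R]
    [Fintype l] [Fintype m] [Fintype n] [DecidableEq l] [DecidableEq n]
    (W : Matrix l m R) (B : Matrix n n R) (ρ : Matrix (m × n) (m × n) R) :
    ((1 ⊗ₖ B) * ((W ⊗ₖ (1 : Matrix n n R)) * ρ * (W ⊗ₖ (1 : Matrix n n R))ᴴ)).trace =
      (((Wᴴ * W) ⊗ₖ B) * ρ).trace := by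
  rw [conjTranspose_kronecker, conjTranspose_one, ← Matrix.mul_assoc, ← Matrix.mul_assoc,
    trace_mul_cycle, ← Matrix.mul_assoc, ← mul_kronecker_mul, ← mul_kronecker_mul,
    Matrix.one_mul, Matrix.mul_one, Matrix.mul_one]

lemma conjTranspose_mul_self_Upt_mul_Apos (α : ℝ) :
    (Upt α * Apos)ᴴ * (Upt α * Apos) =
      ((1 + Real.sin α ^ 2 : ℝ) : ℂ) • (1 : Matrix (Fin 2) (Fin 2) ℂ)
        + (2 * Real.sin α : ℂ) • σy := by
  ext i j
  fin_cases i <;> fin_cases j <;>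
    simp [Upt, Apos, σy, mul_apply, Fin.sum_univ_two, conjTranspose_apply, Complex.ext_iff,
      -Complex.ofReal_sin, -Complex.ofReal_pow] <;> ring

lemma conjTranspose_mul_self_Upt_mul_Aneg (α : ℝ) :
    (Upt α * Aneg)ᴴ * (Upt α * Aneg) =
      ((1 + Real.sin α ^ 2 : ℝ) : ℂ) • (1 : Matrix (Fin 2) (Fin 2) ℂ)
        + (-(2 * Real.sin α) : ℂ) • σy := by
  ext i j
  fin_cases i <;> fin_cases j <;>
    simp [Upt, Aneg, σx, σy, mul_apply, Fin.sum_univ_two, conjTranspose_apply, Complex.ext_iff,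
      -Complex.ofReal_sin, -Complex.ofReal_pow] <;> ring

section CanonicalState

variable (mx my mz nx ny nz Cxx Cyy Czz : ℝ)

lemma trace_kronecker_mul_ρcan (A B : Matrix (Fin 2) (Fin 2) ℂ) :
    ((A ⊗ₖ B) * ρcan mx my mz nx ny nz Cxx Cyy Czz).trace =
      (1 / 4 : ℂ) * (A.trace * B.trace
        + mx * (A * σx).trace * B.trace
        + my * (A * σy).trace * B.trace
        + mz * (A * σz).trace * B.trace
        + nx * A.trace * (B * σx).trace
        + ny * A.trace * (B * σy).trace
        + nz * A.trace * (B * σz).trace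
        + Cxx * (A * σx).trace * (B * σx).trace
        + Cyy * (A * σy).trace * (B * σy).trace
        + Czz * (A * σz).trace * (B * σz).trace) := by
  rw [ρcan, ← one_kronecker_one (α := ℂ) (m := Fin 2) (n := Fin 2)]
  simp only [Matrix.mul_smul, Matrix.mul_add, trace_smul, trace_add, ← mul_kronecker_mul,
    trace_kronecker, smul_eq_mul, Matrix.mul_one]
  ring

lemma trace_ρcan : (ρcan mx my mz nx ny nz Cxx Cyy Czz).trace = 1 := by
  have h := trace_kronecker_mul_ρcan mx my mz nx ny nz Cxx Cyy Czz 1 1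
  rw [one_kronecker_one, Matrix.one_mul] at h
  rw [h]
  norm_num [σx, σy, σz, trace_fin_two]

lemma trace_σy_kronecker_mul_ρcan (B : Matrix (Fin 2) (Fin 2) ℂ) :
    ((σy ⊗ₖ B) * ρcan mx my mz nx ny nz Cxx Cyy Czz).trace =
      (my * B.trace + Cyy * (B * σy).trace) / 2 := by
  have hσy : σy.trace = 0 := by simp [σy, trace_fin_two]
  have hσyσx : (σy * σx).trace = 0 := by simp [σx, σy, trace_fin_two]
  have hσyσy : (σy * σy).trace = 2 := by norm_num [σy, trace_fin_two]
  have hσyσz : (σy * σz).trace = 0 := by simp [σy, σz, trace_fin_two]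
  rw [trace_kronecker_mul_ρcan, hσy, hσyσx, hσyσy, hσyσz]
  ring

end CanonicalState

section NoSignaling

variable (mx mz nx ny nz Cxx Czz α : ℝ) (B : Matrix (Fin 2) (Fin 2) ℂ)

lemma trace_one_kronecker_mul_postPlus_ρcan :
    ((1 ⊗ₖ B) * postPlus α (ρcan mx 0 mz nx ny nz Cxx 0 Czz)).trace =
      ((1 + Real.sin α ^ 2 : ℝ) : ℂ) * ((1 ⊗ₖ B) * ρcan mx 0 mz nx ny nz Cxx 0 Czz).trace := by
  rw [postPlus, trace_one_kronecker_mul_conj, conjTranspose_mul_self_Upt_mul_Apos,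
    add_kronecker, smul_kronecker, smul_kronecker, Matrix.add_mul, Matrix.smul_mul,
    Matrix.smul_mul, trace_add, trace_smul, trace_smul, trace_σy_kronecker_mul_ρcan]
  simp

lemma trace_one_kronecker_mul_postMinus_ρcan :
    ((1 ⊗ₖ B) * postMinus α (ρcan mx 0 mz nx ny nz Cxx 0 Czz)).trace =
      ((1 + Real.sin α ^ 2 : ℝ) : ℂ) * ((1 ⊗ₖ B) * ρcan mx 0 mz nx ny nz Cxx 0 Czz).trace := by
  rw [postMinus, trace_one_kronecker_mul_conj, conjTranspose_mul_self_Upt_mul_Aneg,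
    add_kronecker, smul_kronecker, smul_kronecker, Matrix.add_mul, Matrix.smul_mul,
    Matrix.smul_mul, trace_add, trace_smul, trace_smul, trace_σy_kronecker_mul_ρcan]
  simp

lemma trace_postPlus_ρcan :
    (postPlus α (ρcan mx 0 mz nx ny nz Cxx 0 Czz)).trace = ((1 + Real.sin α ^ 2 : ℝ) : ℂ) := by
  simpa [trace_ρcan] using trace_one_kronecker_mul_postPlus_ρcan mx mz nx ny nz Cxx Czz α 1

lemma trace_postMinus_ρcan :
    (postMinus α (ρcan mx 0 mz nx ny nz Cxx 0 Czz)).trace = ((1 + Real.sin α ^ 2 : ℝ) : ℂ) := by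
  simpa [trace_ρcan] using trace_one_kronecker_mul_postMinus_ρcan mx mz nx ny nz Cxx Czz α 1

end NoSignaling

theorem stmt8_general (mx my mz nx ny nz Cxx Cyy Czz : ℝ)
    (ρ : Matrix (Fin 2 × Fin 2) (Fin 2 × Fin 2) ℂ)
    (hρ : ρ = ρcan mx my mz nx ny nz Cxx Cyy Czz)
    (hmy : my = 0) (hCyy : Cyy = 0) :
    ∀ α z u : ℝ,
      0 < ((postPlus α ρ).trace).re ∧
      0 < ((postMinus α ρ).trace).re ∧
      Pplus α ρ (Pizu z u) = Pminus α ρ (Pizu z u) := by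
  intro α z u
  subst hρ hmy hCyy
  have hnormalization_pos : 0 < ((1 + Real.sin α ^ 2 : ℝ) : ℂ).re := by
    rw [Complex.ofReal_re]; positivity
  refine ⟨?_, ?_, ?_⟩
  · rwa [trace_postPlus_ρcan]
  · rwa [trace_postMinus_ρcan]
  · rw [Pplus, Pminus, trace_one_kronecker_mul_postPlus_ρcan,
      trace_one_kronecker_mul_postMinus_ρcan, trace_postPlus_ρcan, trace_postMinus_ρcan]

/-- No-signaling direction of Theorem 1: if the `y`-components `my` and `Cyy` of
the shared canonical two-qubit state vanish, then for every `α`, `z`, `u` the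
post-selection traces are positive and Bob's outcome probabilities do not
depend on Alice's operation. -/
theorem stmt8 (mx my mz nx ny nz Cxx Cyy Czz : ℝ)
    (ρ : Matrix (Fin 2 × Fin 2) (Fin 2 × Fin 2) ℂ)
    (hρ : ρ = ρcan mx my mz nx ny nz Cxx Cyy Czz)
    (hpsd : ρ.PosSemidef)
    (hmy : my = 0) (hCyy : Cyy = 0) :
    ∀ α z u : ℝ,
      0 < ((postPlus α ρ).trace).re ∧
      0 < ((postMinus α ρ).trace).re ∧
      Pplus α ρ (Pizu z u) = Pminus α ρ (Pizu z u) :=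
  stmt8_general mx my mz nx ny nz Cxx Cyy Czz ρ hρ hmy hCyy
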